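/- arXiv:0811.3500 — 8 statements merged into one kernel-verified Lean document; each statement's English description precedes it below -/
import Mathlib

section
/- Let G be a simple graph on a finite vertex set and let {u,v} be an edge of G. Then G*u*v*u = G*v*u*v, i.e. applying local complementation successively at u, v, u yields the same graph as applying it successively at v, u, v. -/
/-! Local complementation at `w` does not change the neighbourhood of `w`. Following the three
steps, `G*u*v*u` exchanges the neighbourhoods of `u` and `v` and toggles a pair `x, y` outside
`{u, v}` exactly when one of `x ~ u ∧ y ~ v`, `x ~ v ∧ y ~ u` holds. That is the pivot
`G.pivot u v`, whose defining formula is symmetric in `u` and `v`. -/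

set_option linter.unusedSectionVars false

variable {V : Type*} [Fintype V] [DecidableEq V]

/-- Local complementation at a vertex `w`: complement the edges within `N_G(w)`. -/
def SimpleGraph.localComp (G : SimpleGraph V) (w : V) : SimpleGraph V where
  Adj x y := x ≠ y ∧ Xor' (G.Adj x y) (G.Adj x w ∧ G.Adj y w)
  symm := by
    constructor
    intro x y ⟨hne, hx⟩
    refine ⟨hne.symm, ?_⟩
    have h1 := G.adj_comm x y
    unfold Xor' Xor at hx ⊢
    tauto
  loopless := by constructor; intro x ⟨h, _⟩; exact h rfl

/-- `x ∼_G y` : `x = y` or `{x,y}` is an edge of `G`. -/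
def SimpleGraph.nbr (G : SimpleGraph V) (x y : V) : Prop := x = y ∨ G.Adj x y

theorem SimpleGraph.nbr_comm (G : SimpleGraph V) (x y : V) : G.nbr x y ↔ G.nbr y x :=
  or_congr eq_comm (G.adj_comm x y)

private theorem xor_swap_right (a b c : Prop) : Xor' (Xor' a b) c ↔ Xor' (Xor' a c) b := by
  unfold Xor' Xor; tauto

/-- The pivot `G[uv]` of `G` on an edge `{u,v}`, characterized by
`x ∼_{G[uv]} y ⟺ (x ∼_G y) XOR ((x ∼_G u) ∧ (y ∼_G v)) XOR ((x ∼_G v) ∧ (y ∼_G u))`. -/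
def SimpleGraph.pivot (G : SimpleGraph V) (u v : V) : SimpleGraph V where
  Adj x y := x ≠ y ∧
    Xor' (Xor' (G.nbr x y) (G.nbr x u ∧ G.nbr y v)) (G.nbr x v ∧ G.nbr y u)
  symm := by
    constructor
    intro x y ⟨hne, hx⟩
    refine ⟨hne.symm, ?_⟩
    show Xor' (Xor' (G.nbr y x) (G.nbr y u ∧ G.nbr x v)) (G.nbr y v ∧ G.nbr x u)
    rw [G.nbr_comm y x, and_comm (a := G.nbr y u) (b := G.nbr x v),
      and_comm (a := G.nbr y v) (b := G.nbr x u)]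
    exact (xor_swap_right _ _ _).mp hx
  loopless := by constructor; intro x ⟨h, _⟩; exact h rfl

/-- Determinant over GF(2) of the adjacency matrix of the subgraph of `G` induced by `S`. -/
noncomputable def gdet (G : SimpleGraph V) (S : Finset V) : ZMod 2 := by
  classical
  exact Matrix.det (Matrix.of fun i j : S => if G.Adj i j then (1 : ZMod 2) else 0)

/-- Apply a sequence of pivots (left to right). -/
def applyPivots (G : SimpleGraph V) : List (V × V) → SimpleGraph V
  | [] => G
  | p :: φ => applyPivots (G.pivot p.1 p.2) φ

/-- A sequence of pivots is applicable when each pair is an edge of the graph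
obtained by applying all preceding pivots. -/
def PivotsApplicable (G : SimpleGraph V) : List (V × V) → Prop
  | [] => True
  | p :: φ => G.Adj p.1 p.2 ∧ PivotsApplicable (G.pivot p.1 p.2) φ

/-- The support of a sequence of pivots: vertices occurring an odd number of times. -/
def pivotSupport (φ : List (V × V)) : Finset V :=
  Finset.univ.filter fun x => Odd ((φ.flatMap fun p => [p.1, p.2]).count x)

/-- A sequence of pivots is reduced if its pivot vertices are pairwise distinct. -/
def ReducedSeq (φ : List (V × V)) : Prop := (φ.flatMap fun p => [p.1, p.2]).Nodup

/-- The number of perfect matchings of the subgraph of `G` induced by `S`: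
sets of edges of `G` inside `S` such that every vertex of `S` lies in exactly one of them. -/
noncomputable def pmCount (G : SimpleGraph V) (S : Finset V) : ℕ := by
  classical
  exact (Finset.univ.filter fun P : Finset (Sym2 V) =>
    (∀ e ∈ P, e ∈ G.edgeSet ∧ ∀ v ∈ e, v ∈ S) ∧
    ∀ v ∈ S, ∃! e, e ∈ P ∧ v ∈ e).card

namespace SimpleGraph

theorem ext_of_adj_iff_of_ne {W : Type*} {G H : SimpleGraph W} {u v : W}
    (h : ∀ x y, x ≠ y → y ≠ u → y ≠ v → (G.Adj x y ↔ H.Adj x y))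
    (huv : G.Adj u v ↔ H.Adj u v) : G = H := by
  ext x y
  by_cases hxy : x = y
  · simp [hxy]
  by_cases hy : y ≠ u ∧ y ≠ v
  · exact h x y hxy hy.1 hy.2
  by_cases hx : x ≠ u ∧ x ≠ v
  · rw [G.adj_comm, H.adj_comm]
    exact h y x (Ne.symm hxy) hx.1 hx.2
  obtain ⟨rfl, rfl⟩ | ⟨rfl, rfl⟩ : x = u ∧ y = v ∨ x = v ∧ y = u := by grind
  · exact huv
  · rw [G.adj_comm, H.adj_comm]
    exact huv

variable (G : SimpleGraph V) {u v w x y : V}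

theorem localComp_adj :
    (G.localComp w).Adj x y ↔ x ≠ y ∧ Xor (G.Adj x y) (G.Adj x w ∧ G.Adj y w) := Iff.rfl

theorem pivot_adj : (G.pivot u v).Adj x y ↔
    x ≠ y ∧ Xor (Xor (G.nbr x y) (G.nbr x u ∧ G.nbr y v)) (G.nbr x v ∧ G.nbr y u) := Iff.rfl

theorem pivot_comm (u v : V) : G.pivot u v = G.pivot v u := by
  ext x y
  simp only [pivot_adj, and_congr_right_iff]
  intro _
  grind [nbr_comm]

theorem localComp_adj_self : (G.localComp w).Adj x w ↔ G.Adj x w := by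
  simp only [localComp_adj, G.loopless.irrefl w, and_false]
  grind [Adj.ne]

theorem localComp_self_adj : (G.localComp w).Adj w x ↔ G.Adj w x := by
  rw [adj_comm, localComp_adj_self, adj_comm]

theorem localComp_adj_of_adj (hwv : G.Adj w v) (hx : x ≠ v) :
    (G.localComp w).Adj x v ↔ Xor (G.Adj x v) (G.Adj x w) := by
  simp [localComp_adj, hx, G.adj_symm hwv]

theorem localComp_uv_adj_u (huv : G.Adj u v) (hxu : x ≠ u) (hxv : x ≠ v) :
    ((G.localComp u).localComp v).Adj x u ↔ G.Adj x v := by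
  rw [localComp_adj_of_adj _ ((G.localComp_adj_self).2 huv.symm) hxu,
    localComp_adj_self, localComp_adj_of_adj _ huv hxv]
  grind

theorem localComp_uvu_adj_of_ne (huv : G.Adj u v) (hxy : x ≠ y)
    (hxu : x ≠ u) (hxv : x ≠ v) (hyu : y ≠ u) (hyv : y ≠ v) :
    (((G.localComp u).localComp v).localComp u).Adj x y ↔
      Xor (Xor (G.Adj x y) (G.Adj x u ∧ G.Adj y v)) (G.Adj x v ∧ G.Adj y u) := by
  rw [localComp_adj, G.localComp_uv_adj_u huv hxu hxv, G.localComp_uv_adj_u huv hyu hyv,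
    localComp_adj, localComp_adj_of_adj _ huv hxv, localComp_adj_of_adj _ huv hyv, localComp_adj]
  -- over GF(2): `xy + xu⬝yu + (xv + xu)(yv + yu) + xv⬝yv = xy + xu⬝yv + xv⬝yu`
  grind

theorem localComp_uvu_adj_u (huv : G.Adj u v) (hyu : y ≠ u) (hyv : y ≠ v) :
    (((G.localComp u).localComp v).localComp u).Adj u y ↔ G.Adj y v := by
  rw [adj_comm, localComp_adj_self, G.localComp_uv_adj_u huv hyu hyv]

theorem localComp_uvu_adj_v (huv : G.Adj u v) (hyu : y ≠ u) (hyv : y ≠ v) :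
    (((G.localComp u).localComp v).localComp u).Adj v y ↔ G.Adj y u := by
  rw [localComp_adj, G.localComp_uv_adj_u huv hyu hyv, localComp_self_adj,
    localComp_self_adj, localComp_adj_self, localComp_adj, G.adj_comm v y]
  simp only [ne_eq, hyv.symm, not_false_eq_true, huv.symm, true_and]
  grind

theorem localComp_uvu_adj_u_v (huv : G.Adj u v) :
    (((G.localComp u).localComp v).localComp u).Adj u v := by
  rwa [localComp_self_adj, localComp_adj_self, localComp_self_adj]

theorem localComp_uvu_eq_pivot (huv : G.Adj u v) :
    ((G.localComp u).localComp v).localComp u = G.pivot u v := by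
  refine ext_of_adj_iff_of_ne (u := u) (v := v) (fun x y hxy hyu hyv => ?_) ?_
  · rw [pivot_adj]
    obtain rfl | hxu := eq_or_ne x u
    · rw [G.localComp_uvu_adj_u huv hyu hyv]
      simp only [ne_eq, hxy, not_false_eq_true, nbr, G.adj_comm x y, false_or, SimpleGraph.irrefl,
        or_false, hyv, true_and, huv, or_true, hyu]
      grind
    obtain rfl | hxv := eq_or_ne x v
    · rw [G.localComp_uvu_adj_v huv hyu hyv]
      simp [nbr, hxy, hyu, hyv, hxu, huv.symm, G.adj_comm x y]
    rw [G.localComp_uvu_adj_of_ne huv hxy hxu hxv hyu hyv]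
    simp [nbr, hxy, hxu, hxv, hyu, hyv]
  · simp [G.localComp_uvu_adj_u_v huv, pivot_adj, nbr, huv, huv.symm, huv.ne]

end SimpleGraph

/-- For an edge `{u,v}` of a simple graph `G`, `G*u*v*u = G*v*u*v`. -/
theorem localComp_uvu_eq_vuv (G : SimpleGraph V) (u v : V) (huv : G.Adj u v) :
    ((G.localComp u).localComp v).localComp u
      = ((G.localComp v).localComp u).localComp v := by
  rw [G.localComp_uvu_eq_pivot huv, G.localComp_uvu_eq_pivot huv.symm, G.pivot_comm]
end

section
/- Let V be a finite set, let A be a V × V matrix over GF(2), and let X ⊆ V be such that the principal submatrix A[X] is invertible (equivalently det A[X] = 1). Then for every Y ⊆ V, det((A*X)[Y]) = det(A[X ⊕ Y]), where ⊕ is symmetric difference. -/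
set_option linter.unusedSectionVars false

variable {V : Type*} [Fintype V] [DecidableEq V]

/-- Principal submatrix with rows and columns indexed by `S`. -/
def psub (A : Matrix V V (ZMod 2)) (S : Finset V) : Matrix S S (ZMod 2) :=
  A.submatrix (fun i : S => (i : V)) (fun j : S => (j : V))

/-- Local complementation at a looped vertex `u` of a graph with loops,
identified with its symmetric adjacency matrix over GF(2):
`(A*u)_{xy} = A_{xy} + A_{xu}·A_{uy}` for `x, y ≠ u`, entries in row/column `u` unchanged. -/
def matLC (A : Matrix V V (ZMod 2)) (u : V) : Matrix V V (ZMod 2) :=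
  fun x y => if x = u ∨ y = u then A x y else A x y + A x u * A u y

/-- `s_A(x,y)` : `x = y` or `A_{xy} = 1`. -/
def matNbr (A : Matrix V V (ZMod 2)) (x y : V) : Prop := x = y ∨ A x y = 1

/-- Pivot `A[uv]` on an edge `{u,v}` between two loop-free vertices of a graph with loops:
same diagonal as `A`, and for `x ≠ y`,
`(A[uv])_{xy} = A_{xy} XOR (s_A(x,u) ∧ s_A(y,v)) XOR (s_A(x,v) ∧ s_A(y,u))`. -/
noncomputable def matPivotEdge (A : Matrix V V (ZMod 2)) (u v : V) : Matrix V V (ZMod 2) := by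
  classical
  exact fun x y =>
    if x = y then A x y
    else A x y + (if matNbr A x u ∧ matNbr A y v then 1 else 0)
               + (if matNbr A x v ∧ matNbr A y u then 1 else 0)

/-- Apply a sequence of mixed operations (left to right): `Sum.inl u` is the local
complementation `*u`, `Sum.inr (u,v)` is the pivot `[uv]`. -/
noncomputable def applyOps (A : Matrix V V (ZMod 2)) : List (V ⊕ V × V) → Matrix V V (ZMod 2)
  | [] => A
  | (Sum.inl u) :: φ => applyOps (matLC A u) φ
  | (Sum.inr p) :: φ => applyOps (matPivotEdge A p.1 p.2) φ

/-- A mixed sequence is applicable when each operation's defining condition holds in the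
matrix obtained by applying all preceding operations: `*u` needs a loop at `u`, and `[uv]`
needs `u ≠ v`, both loop-free, and `A_{uv} = 1`. -/
def OpsApplicable (A : Matrix V V (ZMod 2)) : List (V ⊕ V × V) → Prop
  | [] => True
  | (Sum.inl u) :: φ => A u u = 1 ∧ OpsApplicable (matLC A u) φ
  | (Sum.inr p) :: φ => p.1 ≠ p.2 ∧ A p.1 p.1 = 0 ∧ A p.2 p.2 = 0 ∧ A p.1 p.2 = 1 ∧
      OpsApplicable (matPivotEdge A p.1 p.2) φ

/-- The list of vertex occurrences of a mixed sequence: `*u` contributes one occurrence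
of `u`, `[uv]` one occurrence each of `u` and `v`. -/
def opsVertices (φ : List (V ⊕ V × V)) : List V :=
  φ.flatMap fun o => match o with | Sum.inl u => [u] | Sum.inr p => [p.1, p.2]

/-- The support of a mixed sequence: vertices occurring an odd number of times. -/
def opsSupport (φ : List (V ⊕ V × V)) : Finset V :=
  Finset.univ.filter fun x => Odd ((opsVertices φ).count x)

/-- Geelen's pivot of a matrix on a set `X` of indices (over GF(2)), given blockwise by
`P⁻¹`, `P⁻¹Q`, `RP⁻¹` and the Schur complement `S − RP⁻¹Q`, where `P = A[X]`
(over GF(2) the sign of `−P⁻¹` is immaterial). -/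
noncomputable def matPivot (A : Matrix V V (ZMod 2)) (X : Finset V) : Matrix V V (ZMod 2) :=
  fun y z =>
    let P : Matrix X X (ZMod 2) := (psub A X)⁻¹
    if hy : y ∈ X then
      if hz : z ∈ X then P ⟨y, hy⟩ ⟨z, hz⟩
      else ∑ w : X, P ⟨y, hy⟩ w * A (w : V) z
    else
      if hz : z ∈ X then ∑ w : X, A y (w : V) * P w ⟨z, hz⟩
      else A y z - ∑ w : X, ∑ w' : X, A y (w : V) * P w w' * A (w' : V) z


def colMix (A : Matrix V V (ZMod 2)) (S : Finset V) : Matrix V V (ZMod 2) :=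
  fun i j => if j ∈ S then A i j else if i = j then 1 else 0

lemma det_colMix (A : Matrix V V (ZMod 2)) (S : Finset V) :
    (colMix A S).det = (psub A S).det := by
  classical
  let e : {x // x ∈ S} ⊕ {x // x ∉ S} ≃ V := Equiv.sumCompl (· ∈ S)
  rw [← Matrix.det_submatrix_equiv_self e]
  have : (colMix A S).submatrix e e =
      Matrix.fromBlocks (psub A S) 0
        (A.submatrix (fun i : {x // x ∉ S} => (i : V)) (fun j : S => (j : V))) 1 := by
    ext i j
    cases i with
    | inl i => cases j with
      | inl j => simp [e, colMix, psub, Matrix.submatrix, j.2]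
      | inr j =>
          have h1 : (j : V) ∉ S := j.2
          have h2 : (i : V) ≠ (j : V) := fun h => h1 (h ▸ i.2)
          simp [e, colMix, Matrix.submatrix, h1, h2]
    | inr i => cases j with
      | inl j => simp [e, colMix, Matrix.submatrix, j.2]
      | inr j =>
          have h1 : (j : V) ∉ S := j.2
          simp [e, colMix, Matrix.submatrix, h1, Matrix.one_apply, Subtype.ext_iff]
  rw [this, Matrix.det_fromBlocks_zero₁₂]
  simp

lemma colMix_mul_pivot (A : Matrix V V (ZMod 2)) (X : Finset V)
    (hX : (psub A X).det = 1) :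
    colMix A X * matPivot A X = colMix A Xᶜ := by
  classical
  have hunit : IsUnit (psub A X).det := by rw [hX]; exact isUnit_one
  have hPP : psub A X * (psub A X)⁻¹ = 1 := Matrix.mul_nonsing_inv _ hunit
  set P : Matrix X X (ZMod 2) := (psub A X)⁻¹ with hP
  set B := matPivot A X with hB
  ext i j
  rw [Matrix.mul_apply]
  have hsplit : ∑ k, colMix A X i k * B k j
      = (∑ k ∈ X, A i k * B k j) + ∑ k ∈ Xᶜ, (if i = k then 1 else 0) * B k j := by
    rw [← Finset.sum_filter_add_sum_filter_not Finset.univ (· ∈ X)]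
    congr 1
    · exact Finset.sum_congr (Finset.filter_univ_mem X) (fun k hk => by simp [colMix, hk])
    · apply Finset.sum_congr (by ext k; simp) (fun k hk => by
        simp only [Finset.mem_compl] at hk
        simp [colMix, hk])
  rw [hsplit]
  have hsecond : ∑ k ∈ Xᶜ, (if i = k then 1 else 0) * B k j
      = if i ∈ Xᶜ then B i j else 0 := by
    rw [← Finset.sum_ite_eq Xᶜ i (fun k => B k j)]
    apply Finset.sum_congr rfl (fun k hk => by split <;> simp_all)
  rw [hsecond]
  have hfirst : ∑ k ∈ X, A i k * B k j = ∑ k : X, A i (k : V) * B (k : V) j :=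
    (Finset.sum_coe_sort X _).symm
  rw [hfirst]
  by_cases hj : j ∈ X
  · -- B k j = P k ⟨j,hj⟩ for k ∈ X
    have hBk : ∀ k : X, B (k : V) j = P k ⟨j, hj⟩ := fun k => by
      simp only [hB, matPivot]; rw [dif_pos k.2, dif_pos hj]
    have hRHS : colMix A Xᶜ i j = if i = j then 1 else 0 := by
      simp [colMix, hj]
    rw [hRHS]
    by_cases hi : i ∈ X
    · rw [if_neg (by simpa using hi)]
      have : ∑ k : X, A i (k : V) * B (k : V) j
          = (psub A X * P) ⟨i, hi⟩ ⟨j, hj⟩ := by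
        rw [Matrix.mul_apply]
        exact Finset.sum_congr rfl fun k _ => by rw [hBk k]; rfl
      rw [this, hPP, add_zero, Matrix.one_apply]
      simp [Subtype.ext_iff]
    · rw [if_pos (by simpa using hi)]
      have hBi : B i j = ∑ w : X, A i (w : V) * P w ⟨j, hj⟩ := by
        simp only [hB, matPivot]; rw [dif_neg hi, dif_pos hj]
      have hij : i ≠ j := fun h => hi (h ▸ hj)
      rw [if_neg hij, hBi]
      have : ∑ k : X, A i (k : V) * B (k : V) j
          = ∑ w : X, A i (w : V) * P w ⟨j, hj⟩ :=
        Finset.sum_congr rfl fun k _ => by rw [hBk k]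
      rw [this]
      have h2 : (2 : ZMod 2) = 0 := by decide
      rw [← two_mul, h2, zero_mul]
  · -- j ∉ X
    have hBk : ∀ k : X, B (k : V) j = ∑ w : X, P k w * A (w : V) j := fun k => by
      simp only [hB, matPivot]; rw [dif_pos k.2, dif_neg hj]
    have hRHS : colMix A Xᶜ i j = A i j := by simp [colMix, hj]
    rw [hRHS]
    have hexp : ∑ k : X, A i (k : V) * B (k : V) j
        = ∑ k : X, ∑ w : X, A i (k : V) * P k w * A (w : V) j := by
      refine Finset.sum_congr rfl fun k _ => ?_
      rw [hBk k, Finset.mul_sum]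
      exact Finset.sum_congr rfl fun w _ => (mul_assoc _ _ _).symm
    rw [hexp]
    by_cases hi : i ∈ X
    · rw [if_neg (by simpa using hi), add_zero, Finset.sum_comm]
      have : ∀ w : X, ∑ k : X, A i (k : V) * P k w * A (w : V) j
          = (psub A X * P) ⟨i, hi⟩ w * A (w : V) j := fun w => by
        rw [Matrix.mul_apply, Finset.sum_mul]; rfl
      rw [Finset.sum_congr rfl fun w _ => this w]
      rw [hPP]
      rw [show ∑ w : X, (1 : Matrix X X (ZMod 2)) ⟨i, hi⟩ w * A (w : V) j
          = ∑ w : X, if (⟨i, hi⟩ : X) = w then A (w : V) j else 0 from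
        Finset.sum_congr rfl fun w _ => by rw [Matrix.one_apply]; split <;> simp_all]
      rw [Finset.sum_ite_eq]
      simp
    · rw [if_pos (by simpa using hi)]
      have hBi : B i j = A i j - ∑ w : X, ∑ w' : X, A i (w : V) * P w w' * A (w' : V) j := by
        simp only [hB, matPivot]; rw [dif_neg hi, dif_neg hj]
      rw [hBi]
      ring

lemma colMix_mul_colMix (A : Matrix V V (ZMod 2)) (X Y : Finset V)
    (hX : (psub A X).det = 1) :
    colMix A X * colMix (matPivot A X) Y = colMix A (symmDiff X Y) := by
  classical
  have key := colMix_mul_pivot A X hX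
  ext i j
  by_cases hj : j ∈ Y
  · have hm : (colMix A X * colMix (matPivot A X) Y) i j
        = (colMix A X * matPivot A X) i j := by
      rw [Matrix.mul_apply, Matrix.mul_apply]
      exact Finset.sum_congr rfl fun k _ => by simp [colMix, hj]
    rw [hm, key]
    by_cases hjX : j ∈ X <;> simp [colMix, Finset.mem_symmDiff, hjX, hj]
  · have hm : (colMix A X * colMix (matPivot A X) Y) i j = colMix A X i j := by
      rw [Matrix.mul_apply]
      have hterm : ∀ k, colMix A X i k * colMix (matPivot A X) Y k j
          = if k = j then colMix A X i k else 0 := fun k => by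
        rw [show colMix (matPivot A X) Y k j = if k = j then 1 else 0 from by
          simp [colMix, hj]]
        split <;> simp
      rw [Finset.sum_congr rfl fun k _ => hterm k, Finset.sum_ite_eq' Finset.univ j,
        if_pos (Finset.mem_univ j)]
    rw [hm]
    by_cases hjX : j ∈ X <;> simp [colMix, Finset.mem_symmDiff, hjX, hj]

/-- if `A[X]` is invertible over GF(2) (equivalently `det A[X] = 1`), then
for every `Y ⊆ V`, `det((A*X)[Y]) = det(A[X ⊕ Y])`. -/
theorem det_matPivot (A : Matrix V V (ZMod 2)) (X : Finset V) (hX : (psub A X).det = 1)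
    (Y : Finset V) :
    (psub (matPivot A X) Y).det = (psub A (symmDiff X Y)).det := by
  classical
  have h := congrArg Matrix.det (colMix_mul_colMix A X Y hX)
  rw [Matrix.det_mul, det_colMix, det_colMix, det_colMix, hX, one_mul] at h
  exact h
end

section
/- (Triangle equality.) Let u, v, w be three distinct vertices of a simple graph G such that {u,v} and {u,w} are edges of G. Then {v,w} is an edge of G[uv], and G[uv][vw] = G[uw]. -/
set_option linter.unusedSectionVars false

variable {V : Type*} [Fintype V] [DecidableEq V]

/-! Over `𝔽₂`, write `N x y` for `x ∼_G y`; the pivot is the rank-two update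
`N' = N + N(·,u) N(v,·) + N(·,v) N(u,·)`. Since `v ∼ v` and `v ∼_G u`, the row of `v` in `G[uv]`
is the old row of `u`, and since `w ∼_G u` the row of `w` changes only by `N(·,u) N(w,v) + N(·,v)`.
Substituting these rows into the second pivot, every term except `N(·,u) N(w,·) + N(·,w) N(u,·)`
appears twice and cancels. -/

namespace SimpleGraph

theorem nbr_iff_adj_of_ne (G : SimpleGraph V) {x y : V} (h : x ≠ y) : G.nbr x y ↔ G.Adj x y :=
  or_iff_right h

theorem nbr_of_adj (G : SimpleGraph V) {x y : V} (h : G.Adj x y) : G.nbr x y :=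
  Or.inr h

theorem nbr_refl (G : SimpleGraph V) (x : V) : G.nbr x x :=
  Or.inl rfl

theorem ext_nbr {G H : SimpleGraph V} (h : ∀ x y, G.nbr x y ↔ H.nbr x y) : G = H := by
  ext x y
  by_cases hxy : x = y
  · subst hxy
    simp
  · rw [← G.nbr_iff_adj_of_ne hxy, ← H.nbr_iff_adj_of_ne hxy, h]

theorem pivot_nbr (G : SimpleGraph V) (u v x y : V) :
    (G.pivot u v).nbr x y ↔
      Xor (Xor (G.nbr x y) (G.nbr x u ∧ G.nbr y v)) (G.nbr x v ∧ G.nbr y u) := by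
  by_cases hxy : x = y
  · subst hxy
    grind [nbr_refl]
  · exact ((G.pivot u v).nbr_iff_adj_of_ne hxy).trans (and_iff_right hxy)

theorem pivot_nbr_right (G : SimpleGraph V) {u v : V} (hvu : G.nbr v u) (x : V) :
    (G.pivot u v).nbr x v ↔ G.nbr x u := by
  rw [pivot_nbr]
  grind [nbr_refl]

theorem pivot_nbr_of_nbr (G : SimpleGraph V) {u v w : V} (hwu : G.nbr w u) (x : V) :
    (G.pivot u v).nbr x w ↔ Xor (Xor (G.nbr x w) (G.nbr x u ∧ G.nbr w v)) (G.nbr x v) := by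
  rw [pivot_nbr]
  grind

end SimpleGraph

theorem pivot_triangle_general (G : SimpleGraph V) (u v w : V)
    (hvw : v ≠ w)
    (h1 : G.Adj u v) (h2 : G.Adj u w) :
    (G.pivot u v).Adj v w ∧ (G.pivot u v).pivot v w = G.pivot u w := by
  have hvu : G.nbr v u := G.nbr_of_adj h1.symm
  have hwu : G.nbr w u := G.nbr_of_adj h2.symm
  refine ⟨((G.pivot u v).nbr_iff_adj_of_ne hvw).1 ?_, SimpleGraph.ext_nbr fun x y => ?_⟩
  · rw [G.pivot_nbr_of_nbr hwu, G.nbr_comm w v]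
    grind [SimpleGraph.nbr_refl]
  · rw [(G.pivot u v).pivot_nbr, G.pivot_nbr u v x y, G.pivot_nbr_right hvu,
      G.pivot_nbr_right hvu, G.pivot_nbr_of_nbr hwu, G.pivot_nbr_of_nbr hwu, G.pivot_nbr u w]
    grind

/-- Triangle equality: for distinct `u, v, w` with `{u,v}, {u,w} ∈ E(G)`,
`{v,w}` is an edge of `G[uv]` and `G[uv][vw] = G[uw]`. -/
theorem pivot_triangle (G : SimpleGraph V) (u v w : V)
    (huv : u ≠ v) (huw : u ≠ w) (hvw : v ≠ w)
    (h1 : G.Adj u v) (h2 : G.Adj u w) :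
    (G.pivot u v).Adj v w ∧ (G.pivot u v).pivot v w = G.pivot u w :=
  pivot_triangle_general G u v w hvw h1 h2
end

section
/- Let v, v' be vertices of a simple graph G such that for every vertex x, v ∼_G x if and only if v' ∼_G x. Then for every sequence of pivots φ applicable to G and every vertex x, v ∼_{Gφ} x if and only if v' ∼_{Gφ} x. -/
set_option linter.unusedSectionVars false

variable {V : Type*} [Fintype V] [DecidableEq V]

/-!
Extended to the diagonal, the pivot formula expresses `x ∼_{G[uw]} y` through `x ∼_G y`,
`x ∼_G u`, `x ∼_G w`, `y ∼_G u` and `y ∼_G w` alone. Hence a vertex enters `G[uw]` only through its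
closed neighbourhood in `G`, and closed twins stay closed twins after every pivot.
-/

theorem SimpleGraph.pivot_nbr_iff (G : SimpleGraph V) (u w x y : V) :
    (G.pivot u w).nbr x y ↔
      Xor' (Xor' (G.nbr x y) (G.nbr x u ∧ G.nbr y w)) (G.nbr x w ∧ G.nbr y u) := by
  by_cases hxy : x = y
  · subst hxy
    -- on the diagonal the two correction terms coincide and cancel
    have hxx : G.nbr x x := Or.inl rfl
    refine iff_of_true (Or.inl rfl) ?_
    rw [and_comm (a := G.nbr x w)]
    simp only [hxx, Xor', xor_true, xor_not_left, iff_self]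
  · change x = y ∨ (x ≠ y ∧ _) ↔ _
    simp only [hxy, false_or, ne_eq, not_false_eq_true, true_and]

theorem SimpleGraph.pivot_nbr_iff_of_twins {G : SimpleGraph V} {v v' : V}
    (h : ∀ x, G.nbr v x ↔ G.nbr v' x) (u w x : V) :
    (G.pivot u w).nbr v x ↔ (G.pivot u w).nbr v' x := by
  simp only [SimpleGraph.pivot_nbr_iff, h]

theorem pivot_twins_general (G : SimpleGraph V) (v v' : V)
    (h : ∀ x : V, G.nbr v x ↔ G.nbr v' x)
    (φ : List (V × V)) (x : V) :
    ((applyPivots G φ).nbr v x ↔ (applyPivots G φ).nbr v' x) := by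
  induction φ generalizing G with
  | nil => exact h x
  | cons p φ ih => exact ih (G.pivot p.1 p.2) (G.pivot_nbr_iff_of_twins h p.1 p.2)

/-- twins stay twins under any applicable sequence of pivots. -/
theorem pivot_twins (G : SimpleGraph V) (v v' : V)
    (h : ∀ x : V, G.nbr v x ↔ G.nbr v' x)
    (φ : List (V × V)) (hφ : PivotsApplicable G φ) (x : V) :
    ((applyPivots G φ).nbr v x ↔ (applyPivots G φ).nbr v' x) :=
  pivot_twins_general G v v' h φ x
end

section
/- For every simple graph G on a finite vertex set, the determinant over GF(2) of the adjacency matrix of G equals the number of perfect matchings of G modulo 2, i.e. det G = pm(G). -/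
set_option linter.unusedSectionVars false

variable {V : Type*} [Fintype V] [DecidableEq V]

/-
In characteristic 2 signs disappear, so the determinant of the adjacency matrix is
its permanent: the number of permutations `σ` with every `{σ i, i}` an edge. Pairing `σ` with
`σ⁻¹` cancels all such permutations except the involutions, and the involutions (fixed-point free,
since `G` has no loops) are exactly the perfect matchings, read as "swap each vertex with its
partner".
-/

open Finset Equiv

theorem Finset.sum_eq_sum_filter_inv_eq_self {α R : Type*} [Group α] [Fintype α] [DecidableEq α]
    [Ring R] [CharP R 2] (f : α → R) (hf : ∀ g, f g⁻¹ = f g) :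
    ∑ g, f g = ∑ g with g⁻¹ = g, f g := by
  rw [← sum_filter_add_sum_filter_not univ (fun g => g⁻¹ = g), add_eq_left]
  refine sum_involution (fun g _ => g⁻¹) (fun g _ => by rw [hf, CharTwo.add_self_eq_zero])
    (fun g hg _ => (mem_filter.mp hg).2) (fun g hg => ?_) (fun g _ => inv_inv g)
  simpa [eq_comm] using hg

namespace Matrix

variable {n R : Type*} [Fintype n] [DecidableEq n] [CommRing R] [CharP R 2]

theorem det_eq_permanent_of_charTwo (M : Matrix n n R) : M.det = M.permanent := by
  rw [det_apply', permanent]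
  refine sum_congr rfl fun σ _ => ?_
  rcases Int.units_eq_one_or (Perm.sign σ) with h | h <;> simp [h, CharTwo.neg_eq]

theorem IsSymm.permanent_eq_sum_inv_eq_self {M : Matrix n n R} (hM : M.IsSymm) :
    M.permanent = ∑ σ : Perm n with σ⁻¹ = σ, ∏ i, M (σ i) i := by
  refine sum_eq_sum_filter_inv_eq_self _ fun σ => ?_
  calc ∏ i, M (σ⁻¹ i) i = ∏ i, M (σ⁻¹ (σ i)) (σ i) := (Equiv.prod_comp σ _).symm
    _ = ∏ i, M i (σ i) := by simp only [Perm.coe_inv, symm_apply_apply]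
    _ = ∏ i, M (σ i) i := prod_congr rfl fun i _ => hM.apply (σ i) i

end Matrix

theorem SimpleGraph.det_adjMatrix_eq_card_involutions {R : Type*} [CommRing R] [CharP R 2]
    (G : SimpleGraph V) [DecidableRel G.Adj] :
    (G.adjMatrix R).det = #{σ : Perm V | σ⁻¹ = σ ∧ ∀ i, G.Adj (σ i) i} := by
  rw [Matrix.det_eq_permanent_of_charTwo, G.isSymm_adjMatrix.permanent_eq_sum_inv_eq_self]
  simp [SimpleGraph.adjMatrix_apply, prod_boole, sum_boole, filter_filter]

theorem gdet_univ (G : SimpleGraph V) [DecidableRel G.Adj] :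
    gdet G univ = (G.adjMatrix (ZMod 2)).det := by
  unfold gdet
  convert Matrix.det_submatrix_equiv_self (Equiv.subtypeUnivEquiv mem_univ) (G.adjMatrix (ZMod 2))
  ext i j
  simp [SimpleGraph.adjMatrix_apply]

namespace Equiv.Perm

theorem inv_eq_self_iff_involutive {α : Type*} {σ : Perm α} :
    σ⁻¹ = σ ↔ Function.Involutive σ := by
  rw [inv_eq_iff_mul_eq_one, Perm.ext_iff]
  rfl

def pairEdges (σ : Perm V) : Finset (Sym2 V) := univ.image fun v => s(v, σ v)

theorem mem_pairEdges_and_mem_iff {σ : Perm V} (hσ : Function.Involutive σ) {v : V}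
    {e : Sym2 V} : e ∈ σ.pairEdges ∧ v ∈ e ↔ e = s(v, σ v) := by
  constructor
  · rintro ⟨he, hv⟩
    obtain ⟨w, -, rfl⟩ := mem_image.mp he
    rcases Sym2.mem_iff.mp hv with rfl | rfl
    · rfl
    · rw [hσ w, Sym2.eq_swap]
  · rintro rfl
    exact ⟨mem_image_of_mem _ (mem_univ v), Sym2.mem_mk_left v _⟩

theorem pairEdges_injOn : Set.InjOn pairEdges {σ : Perm V | Function.Involutive σ} := by
  intro σ hσ τ hτ h
  ext v
  have hv : s(v, σ v) ∈ τ.pairEdges ∧ v ∈ s(v, σ v) :=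
    h ▸ (mem_pairEdges_and_mem_iff hσ).mpr rfl
  exact Sym2.congr_right.mp ((mem_pairEdges_and_mem_iff hτ).mp hv)

theorem exists_involutive_pairEdges_eq {P : Finset (Sym2 V)} (hP : ∀ v, ∃! e, e ∈ P ∧ v ∈ e) :
    ∃ σ : Perm V, Function.Involutive σ ∧ σ.pairEdges = P := by
  choose E hE huniq using hP
  let f v := Sym2.Mem.other' (hE v).2
  have hf (v : V) : s(v, f v) = E v := Sym2.other_spec' _
  have hEf (v : V) : E (f v) = E v := (huniq (f v) (E v) ⟨(hE v).1, Sym2.other_mem' _⟩).symm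
  have hinv : Function.Involutive f := fun v => by
    have : s(f v, f (f v)) = s(f v, v) := by rw [hf, hEf, ← hf, Sym2.eq_swap]
    exact Sym2.congr_right.mp this
  refine ⟨hinv.toPerm f, hinv, ?_⟩
  ext e
  constructor
  · rintro he
    obtain ⟨v, -, rfl⟩ := mem_image.mp he
    exact (hf v).symm ▸ (hE v).1
  · intro he
    obtain ⟨v, hv⟩ : ∃ v, v ∈ e := ⟨_, e.out_fst_mem⟩
    exact mem_image.mpr ⟨v, mem_univ v, (hf v).trans (huniq v e ⟨he, hv⟩).symm⟩

end Equiv.Perm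

open Classical in
theorem card_involutions_eq_pmCount (G : SimpleGraph V) :
    #{σ : Perm V | σ⁻¹ = σ ∧ ∀ i, G.Adj (σ i) i} = pmCount G univ := by
  unfold pmCount
  refine card_bij (fun σ _ => σ.pairEdges) (fun σ hσ => ?_) (fun σ hσ τ hτ h => ?_) fun P hP => ?_
  · obtain ⟨hinv, hadj⟩ := (mem_filter.mp hσ).2
    rw [Perm.inv_eq_self_iff_involutive] at hinv
    refine mem_filter.mpr ⟨mem_univ _, fun e he => ?_, fun v _ => ?_⟩
    · obtain ⟨v, -, rfl⟩ := mem_image.mp he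
      exact ⟨(hadj v).symm, fun _ _ => mem_univ _⟩
    · exact ⟨s(v, σ v), (Perm.mem_pairEdges_and_mem_iff hinv).mpr rfl,
        fun e he => (Perm.mem_pairEdges_and_mem_iff hinv).mp he⟩
  · exact Perm.pairEdges_injOn (Perm.inv_eq_self_iff_involutive.mp (mem_filter.mp hσ).2.1)
      (Perm.inv_eq_self_iff_involutive.mp (mem_filter.mp hτ).2.1) h
  · obtain ⟨-, hedges, hcover⟩ := mem_filter.mp hP
    obtain ⟨σ, hinv, rfl⟩ := Perm.exists_involutive_pairEdges_eq fun v => hcover v (mem_univ v)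
    refine ⟨σ, mem_filter.mpr ⟨mem_univ _, Perm.inv_eq_self_iff_involutive.mpr hinv, fun i => ?_⟩, rfl⟩
    exact ((hedges _ (mem_image_of_mem _ (mem_univ i))).1 : G.Adj i (σ i)).symm

/-- the determinant over GF(2) of the adjacency matrix of `G` equals
the number of perfect matchings of `G` modulo 2. -/
theorem gdet_eq_pm (G : SimpleGraph V) :
    gdet G Finset.univ = (pmCount G Finset.univ : ZMod 2) := by
  classical
  rw [gdet_univ, G.det_adjMatrix_eq_card_involutions, card_involutions_eq_pmCount]
end

section
/- Let u, v, w, z be four distinct vertices of a simple graph G with {u,v}, {w,z} ∈ E(G). Then both sequences [uv][wz] and [wz][uv] are applicable to G (i.e. {w,z} ∈ E(G[uv]) and {u,v} ∈ E(G[wz])) if and only if the induced subgraph G[{u,v,w,z}] has an odd number of perfect matchings. -/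
set_option linter.unusedSectionVars false

variable {V : Type*} [Fintype V] [DecidableEq V]

/-!
For an edge `xy` disjoint from `{u, v}`, the pivot formula toggles `xy` once for each of the two
crossing pairings `{xu, yv}` and `{xv, yu}` lying in `G`. Hence `wz` survives `[uv]`, and `uv`
survives `[wz]`, exactly when the pairings `{uw, vz}` and `{uz, vw}` are both or neither in `G`.
The perfect matchings of `G[{u, v, w, z}]` are `{uv, wz}` together with those of these two
pairings that lie in `G`, so their number is odd in exactly the same case.
-/

theorem SimpleGraph.pivot_adj_of_ne (G : SimpleGraph V) {u v x y : V} (hxy : x ≠ y)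
    (hxu : x ≠ u) (hxv : x ≠ v) (hyu : y ≠ u) (hyv : y ≠ v) :
    (G.pivot u v).Adj x y ↔
      Xor (Xor (G.Adj x y) (G.Adj x u ∧ G.Adj y v)) (G.Adj x v ∧ G.Adj y u) := by
  simp only [SimpleGraph.pivot, SimpleGraph.nbr, hxy, hxu, hxv, hyu, hyv, ne_eq,
    not_false_eq_true, false_or, true_and]
  rfl

theorem SimpleGraph.Adj.pivot_adj_iff {G : SimpleGraph V} {u v x y : V} (hxy : G.Adj x y)
    (hxu : x ≠ u) (hxv : x ≠ v) (hyu : y ≠ u) (hyv : y ≠ v) :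
    (G.pivot u v).Adj x y ↔ ((G.Adj x u ∧ G.Adj y v) ↔ (G.Adj x v ∧ G.Adj y u)) := by
  rw [G.pivot_adj_of_ne hxy.ne hxu hxv hyu hyv]
  simp only [hxy, xor_iff_iff_not, true_iff, not_iff_not]

namespace SimpleGraph

variable {α : Type*} {G : SimpleGraph α} {S : Finset α} {P Q : Finset (Sym2 α)}

def IsPerfectMatchingOn (G : SimpleGraph α) (S : Finset α) (P : Finset (Sym2 α)) : Prop :=
  (∀ e ∈ P, e ∈ G.edgeSet ∧ ∀ x ∈ e, x ∈ S) ∧ ∀ x ∈ S, ∃! e, e ∈ P ∧ x ∈ e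

namespace IsPerfectMatchingOn

theorem eq_of_mem (hP : G.IsPerfectMatchingOn S P) {e f : Sym2 α} {x : α} (he : e ∈ P)
    (hf : f ∈ P) (hxe : x ∈ e) (hxf : x ∈ f) : e = f :=
  (hP.2 x ((hP.1 e he).2 x hxe)).unique ⟨he, hxe⟩ ⟨hf, hxf⟩

theorem exists_adj (hP : G.IsPerfectMatchingOn S P) {x : α} (hx : x ∈ S) :
    ∃ y, G.Adj x y ∧ y ∈ S ∧ s(x, y) ∈ P := by
  obtain ⟨e, ⟨he, hxe⟩, -⟩ := hP.2 x hx
  obtain ⟨y, rfl⟩ : ∃ y, e = s(x, y) := ⟨Sym2.Mem.other hxe, (Sym2.other_spec hxe).symm⟩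
  exact ⟨y, (hP.1 _ he).1, (hP.1 _ he).2 y (Sym2.mem_mk_right x y), he⟩

theorem eq_of_subset (hP : G.IsPerfectMatchingOn S P) (hQP : Q ⊆ P)
    (hQ : ∀ x ∈ S, ∃ e ∈ Q, x ∈ e) : P = Q := by
  refine Finset.Subset.antisymm (fun f hf => ?_) hQP
  obtain ⟨x, hxf⟩ : ∃ x, x ∈ f := ⟨_, Sym2.out_fst_mem f⟩
  obtain ⟨e, he, hxe⟩ := hQ x ((hP.1 f hf).2 x hxf)
  exact hP.eq_of_mem hf (hQP he) hxf hxe ▸ he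

variable [DecidableEq α] {a b c d : α}

theorem eq_pair_of_mem (hP : G.IsPerfectMatchingOn {a, b, c, d} P) (habP : s(a, b) ∈ P)
    (hac : a ≠ c) (had : a ≠ d) (hbc : b ≠ c) (hbd : b ≠ d) : P = {s(a, b), s(c, d)} := by
  obtain ⟨y, hcy, hy, hcyP⟩ := hP.exists_adj (x := c) (by simp)
  have hy_ab : y ∉ s(a, b) := fun hy_ab => by
    have hc : c ∈ s(a, b) :=
      hP.eq_of_mem hcyP habP (Sym2.mem_mk_right c y) hy_ab ▸ Sym2.mem_mk_left c y
    simp [hac.symm, hbc.symm] at hc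
  obtain rfl : y = d := by
    simp only [Finset.mem_insert, Finset.mem_singleton] at hy
    simp only [Sym2.mem_iff, not_or] at hy_ab
    grind [hcy.ne]
  refine hP.eq_of_subset (by simp [Finset.insert_subset_iff, habP, hcyP]) fun x hx => ?_
  simp only [Finset.mem_insert, Finset.mem_singleton] at hx
  rcases hx with rfl | rfl | rfl | rfl <;> simp

end IsPerfectMatchingOn

variable [DecidableEq α] {a b c d : α}

theorem isPerfectMatchingOn_pair (hab : G.Adj a b) (hcd : G.Adj c d) (hac : a ≠ c) (had : a ≠ d)
    (hbc : b ≠ c) (hbd : b ≠ d) : G.IsPerfectMatchingOn {a, b, c, d} {s(a, b), s(c, d)} := by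
  refine ⟨by simp [hab, hcd], fun x hx => ?_⟩
  have hdisj : x ∈ s(a, b) → x ∉ s(c, d) := by
    simp only [Sym2.mem_iff]
    rintro (rfl | rfl) (rfl | rfl) <;> contradiction
  simp only [Finset.mem_insert, Finset.mem_singleton, ← or_assoc, ← Sym2.mem_iff] at hx
  rcases hx with hx | hx
  · refine ⟨_, ⟨by simp, hx⟩, fun e ⟨he, hxe⟩ => ?_⟩
    simp only [Finset.mem_insert, Finset.mem_singleton] at he
    exact he.resolve_right fun h => hdisj hx (h ▸ hxe)
  · refine ⟨_, ⟨by simp, hx⟩, fun e ⟨he, hxe⟩ => ?_⟩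
    simp only [Finset.mem_insert, Finset.mem_singleton] at he
    exact he.resolve_left fun h => hdisj (h ▸ hxe) hx

theorem isPerfectMatchingOn_four_iff (hab : a ≠ b) (hac : a ≠ c) (had : a ≠ d) (hbc : b ≠ c)
    (hbd : b ≠ d) (hcd : c ≠ d) :
    G.IsPerfectMatchingOn {a, b, c, d} P ↔
      (P = {s(a, b), s(c, d)} ∨ P = {s(a, c), s(b, d)} ∨ P = {s(a, d), s(b, c)}) ∧
        ∀ e ∈ P, e ∈ G.edgeSet := by
  have hacbd : ({a, b, c, d} : Finset α) = {a, c, b, d} := by rw [Finset.insert_comm b c]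
  have hadbc : ({a, b, c, d} : Finset α) = {a, d, b, c} := by
    rw [Finset.pair_comm c d, Finset.insert_comm b d]
  constructor
  · intro hP
    refine ⟨?_, fun e he => (hP.1 e he).1⟩
    obtain ⟨y, hay, hy, hayP⟩ := hP.exists_adj (x := a) (by simp)
    simp only [Finset.mem_insert, Finset.mem_singleton] at hy
    rcases hy with rfl | rfl | rfl | rfl
    · exact absurd hay (G.loopless.irrefl y)
    · exact Or.inl (hP.eq_pair_of_mem hayP hac had hbc hbd)
    · exact Or.inr (Or.inl ((hacbd ▸ hP).eq_pair_of_mem hayP hab had hbc.symm hcd))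
    · exact Or.inr (Or.inr ((hadbc ▸ hP).eq_pair_of_mem hayP hab hac hbd.symm hcd.symm))
  · rintro ⟨rfl | rfl | rfl, hE⟩ <;> simp only [Finset.mem_insert, Finset.mem_singleton,
      forall_eq_or_imp, forall_eq, mem_edgeSet] at hE
    · exact isPerfectMatchingOn_pair hE.1 hE.2 hac had hbc hbd
    · exact hacbd ▸ isPerfectMatchingOn_pair hE.1 hE.2 hab had hbc.symm hcd
    · exact hadbc ▸ isPerfectMatchingOn_pair hE.1 hE.2 hab hac hbd.symm hcd.symm

end SimpleGraph

theorem pmCount_eq_card (G : SimpleGraph V) (S : Finset V) (T : Finset (Finset (Sym2 V)))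
    (h : ∀ P, G.IsPerfectMatchingOn S P ↔ P ∈ T) : pmCount G S = T.card := by
  classical
  unfold pmCount
  congr 1
  ext P
  simp only [Finset.mem_filter, Finset.mem_univ, true_and]
  exact h P

theorem pmCount_four (G : SimpleGraph V) [DecidableRel G.Adj] {a b c d : V} (hab : a ≠ b)
    (hac : a ≠ c) (had : a ≠ d) (hbc : b ≠ c) (hbd : b ≠ d) (hcd : c ≠ d) :
    pmCount G {a, b, c, d} = (if G.Adj a b ∧ G.Adj c d then 1 else 0) +
      (if G.Adj a c ∧ G.Adj b d then 1 else 0) + (if G.Adj a d ∧ G.Adj b c then 1 else 0) := by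
  rw [pmCount_eq_card G _ ((({{s(a, b), s(c, d)}, {s(a, c), s(b, d)}, {s(a, d), s(b, c)}} :
      Finset (Finset (Sym2 V)))).filter fun M => ∀ e ∈ M, e ∈ G.edgeSet) fun P => by
    rw [SimpleGraph.isPerfectMatchingOn_four_iff hab hac had hbc hbd hcd]
    simp only [Finset.mem_filter, Finset.mem_insert, Finset.mem_singleton]]
  rw [Finset.card_filter, Finset.sum_insert, Finset.sum_insert, Finset.sum_singleton]
  · simp [add_assoc]
  · intro h
    have := Finset.ext_iff.mp (Finset.mem_singleton.mp h) s(a, c)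
    grind [Sym2.eq_iff]
  · simp only [Finset.mem_insert, Finset.mem_singleton, not_or]
    constructor <;> intro h <;> have := Finset.ext_iff.mp h s(a, b) <;> grind [Sym2.eq_iff]

/-- for four distinct vertices with `{u,v}, {w,z} ∈ E(G)`, both `[uv][wz]`
and `[wz][uv]` are applicable to `G` iff `G[{u,v,w,z}]` has an odd number of
perfect matchings. -/
theorem both_applicable_iff_odd_pm (G : SimpleGraph V) (u v w z : V)
    (hd : [u, v, w, z].Nodup) (h1 : G.Adj u v) (h2 : G.Adj w z) :
    ((G.pivot u v).Adj w z ∧ (G.pivot w z).Adj u v) ↔ Odd (pmCount G {u, v, w, z}) := by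
  classical
  simp only [List.nodup_cons, List.mem_cons, List.not_mem_nil, or_false, List.nodup_nil,
    and_true, not_or] at hd
  obtain ⟨⟨huv, huw, huz⟩, ⟨hvw, hvz⟩, hwz, -⟩ := hd
  rw [h2.pivot_adj_iff (Ne.symm huw) (Ne.symm hvw) (Ne.symm huz) (Ne.symm hvz),
    h1.pivot_adj_iff huw huz hvw hvz, pmCount_four G huv huw huz hvw hvz hwz]
  simp only [h1, h2, G.adj_comm w u, G.adj_comm z v, G.adj_comm w v, G.adj_comm z u,
    and_comm (a := G.Adj v w), and_self, if_true]
  by_cases hA : G.Adj u w ∧ G.Adj v z <;> by_cases hB : G.Adj u z ∧ G.Adj v w <;>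
    simp [hA, hB, Nat.odd_iff]
end

section
/- For every sequence of pivots φ applicable to a simple graph G there exists a reduced sequence of pivots φ' applicable to G with sup(φ') = sup(φ); consequently Gφ = Gφ'. Here a sequence is reduced if no vertex occurs more than once among its pivot pairs. -/
set_option linter.unusedSectionVars false

variable {V : Type*} [Fintype V] [DecidableEq V]

/-! Over GF(2), encode `G` by the graph `{(x, A x)}` of its adjacency matrix `A`, a subset of
`GF(2)^V × GF(2)^V`; it determines `G`. Pivoting on an edge `uv` exchanges the `u`- and
`v`-coordinates of the two factors, so applying `φ` exchanges exactly the coordinates in `sup φ`.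
If exchanging the coordinates in a nonempty set `S` still gives the graph of a function, then `S`
contains an edge `uv` of `G`: otherwise the unit vector at a vertex of `S` would give two images
of `0`. Pivoting on that edge and recursing on `S \ {u, v}` builds a reduced sequence with
support `S`, and its result has the same encoding as `Gφ`. -/

open scoped Classical
open Matrix

def swapOn {ι α : Type*} [DecidableEq ι] (S : Finset ι) (p : (ι → α) × (ι → α)) :
    (ι → α) × (ι → α) :=
  (S.piecewise p.2 p.1, S.piecewise p.1 p.2)

section swapOn

variable {ι α : Type*} [DecidableEq ι]

@[simp]
lemma swapOn_empty : (swapOn ∅ : (ι → α) × (ι → α) → _) = id := by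
  ext p <;> simp [swapOn]

lemma swapOn_comp_swapOn (S T : Finset ι) :
    (swapOn S ∘ swapOn T : (ι → α) × (ι → α) → _) = swapOn (symmDiff S T) := by
  ext p i <;> by_cases hS : i ∈ S <;> by_cases hT : i ∈ T <;>
    simp [swapOn, Finset.piecewise, Finset.mem_symmDiff, hS, hT]

lemma swapOn_injective (S : Finset ι) : Function.Injective (swapOn S : (ι → α) × (ι → α) → _) :=
  Function.LeftInverse.injective (g := swapOn S) fun p => by
    rw [← Function.comp_apply (f := swapOn S), swapOn_comp_swapOn, symmDiff_self,
      Finset.bot_eq_empty, swapOn_empty, id]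

lemma swapOn_pair_eq_add {u v : ι} (huv : u ≠ v) (x y : ι → ZMod 2) :
    swapOn {u, v} (x, y) =
      (x + Pi.single u (x u + y u) + Pi.single v (x v + y v),
        y + Pi.single u (x u + y u) + Pi.single v (x v + y v)) := by
  ext i <;> by_cases hu : i = u <;> by_cases hv : i = v <;> subst_vars <;>
    simp [swapOn, huv.symm, *] <;> grind

end swapOn

namespace SimpleGraph

section adjLagrangian

variable {W : Type*} [Fintype W] (G : SimpleGraph W)

def adjLagrangian : Set ((W → ZMod 2) × (W → ZMod 2)) :=
  Set.range fun x => (x, G.adjMatrix (ZMod 2) *ᵥ x)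

lemma ncard_adjLagrangian : G.adjLagrangian.ncard = Nat.card (W → ZMod 2) :=
  Set.ncard_range_of_injective fun _ _ h => congrArg Prod.fst h

lemma injOn_fst_adjLagrangian : Set.InjOn Prod.fst G.adjLagrangian := by
  rintro _ ⟨x, rfl⟩ _ ⟨z, rfl⟩ (rfl : x = z)
  rfl

lemma adjLagrangian_injective : Function.Injective (adjLagrangian (W := W)) := by
  intro G H h
  have hmat : G.adjMatrix (ZMod 2) = H.adjMatrix (ZMod 2) := by
    refine ext_iff_mulVec.mpr fun x => ?_
    obtain ⟨z, hz⟩ : (x, G.adjMatrix (ZMod 2) *ᵥ x) ∈ H.adjLagrangian := h ▸ ⟨x, rfl⟩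
    obtain ⟨rfl, hz⟩ := Prod.ext_iff.mp hz
    exact hz.symm
  ext x y
  have hxy := congrFun (congrFun hmat x) y
  simp only [adjMatrix_apply] at hxy
  split_ifs at hxy <;> simp_all

end adjLagrangian

private lemma ite_xor (p q : Prop) [Decidable p] [Decidable q] :
    (if Xor p q then 1 else 0 : ZMod 2) = (if p then 1 else 0) + (if q then 1 else 0) := by
  by_cases hp : p <;> by_cases hq : q <;> simp [Xor, hp, hq, CharTwo.add_self_eq_zero]

variable {G : SimpleGraph V}

lemma adjMatrix_pivot_apply (u v x y : V) :
    (G.pivot u v).adjMatrix (ZMod 2) x y = G.adjMatrix (ZMod 2) x y +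
      (G.adjMatrix (ZMod 2) + 1) x u * (G.adjMatrix (ZMod 2) + 1) y v +
      (G.adjMatrix (ZMod 2) + 1) x v * (G.adjMatrix (ZMod 2) + 1) y u := by
  rcases eq_or_ne x y with rfl | hxy
  · simp only [adjMatrix_apply, SimpleGraph.irrefl, if_false, zero_add, mul_comm,
      CharTwo.add_self_eq_zero]
  have hadj : (G.pivot u v).Adj x y ↔
      Xor (Xor (G.nbr x y) (G.nbr x u ∧ G.nbr y v)) (G.nbr x v ∧ G.nbr y u) :=
    and_iff_right hxy
  have hnbr : G.nbr x y ↔ G.Adj x y := or_iff_right hxy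
  have hN (a b : V) : (if G.nbr a b then 1 else 0 : ZMod 2) = (G.adjMatrix (ZMod 2) + 1) a b := by
    rcases eq_or_ne a b with rfl | hab
    · simp [nbr]
    · simp [nbr, hab, one_apply_ne hab]
  simp only [adjMatrix_apply, hadj, ite_xor, ← hN, ite_zero_mul_ite_zero, mul_one, hnbr]

lemma adjMatrix_pivot_mulVec_apply (u v : V) (x : V → ZMod 2) (i : V) :
    ((G.pivot u v).adjMatrix (ZMod 2) *ᵥ x) i = (G.adjMatrix (ZMod 2) *ᵥ x) i +
      (G.adjMatrix (ZMod 2) + 1) i u * ((G.adjMatrix (ZMod 2) + 1) *ᵥ x) v +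
      (G.adjMatrix (ZMod 2) + 1) i v * ((G.adjMatrix (ZMod 2) + 1) *ᵥ x) u := by
  have hsymm : (G.adjMatrix (ZMod 2) + 1).IsSymm := G.isSymm_adjMatrix.add isSymm_one
  simp only [mulVec, dotProduct, adjMatrix_pivot_apply, add_mul, Finset.sum_add_distrib,
    Finset.mul_sum, mul_assoc, hsymm.apply]

lemma swapOn_image_adjLagrangian_subset {u v : V} (huv : G.Adj u v) :
    swapOn {u, v} '' G.adjLagrangian ⊆ (G.pivot u v).adjLagrangian := by
  rintro _ ⟨_, ⟨x, rfl⟩, rfl⟩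
  set A := G.adjMatrix (ZMod 2)
  set a := x u + (A *ᵥ x) u
  set b := x v + (A *ᵥ x) v
  set x' := x + Pi.single u a + Pi.single v b
  have hAx' (i : V) : (A *ᵥ x') i = (A *ᵥ x) i + A i u * a + A i v * b := by
    simp [x', mulVec_add, mul_comm]
  have hNu : ((A + 1) *ᵥ x') u = b := by
    simp only [add_mulVec, one_mulVec, Pi.add_apply, hAx']
    simp [A, x', adjMatrix_apply, huv, huv.ne, a]
    grind
  have hNv : ((A + 1) *ᵥ x') v = a := by
    simp only [add_mulVec, one_mulVec, Pi.add_apply, hAx']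
    simp [A, x', adjMatrix_apply, huv.symm, huv.ne.symm, b]
    grind
  rw [swapOn_pair_eq_add huv.ne]
  refine ⟨x', Prod.ext rfl (funext fun i => ?_)⟩
  dsimp only
  rw [adjMatrix_pivot_mulVec_apply, hNu, hNv, hAx']
  simp only [Pi.add_apply, Matrix.add_apply, one_apply, Pi.single_apply]
  grind

lemma adjLagrangian_pivot {u v : V} (huv : G.Adj u v) :
    (G.pivot u v).adjLagrangian = swapOn {u, v} '' G.adjLagrangian :=
  (Set.eq_of_subset_of_ncard_le (swapOn_image_adjLagrangian_subset huv) (by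
    rw [Set.ncard_image_of_injective _ (swapOn_injective _), ncard_adjLagrangian,
      ncard_adjLagrangian])).symm

end SimpleGraph

lemma pivotSupport_nil : pivotSupport ([] : List (V × V)) = ∅ := by
  simp [pivotSupport]

lemma pivotSupport_cons {u v : V} (huv : u ≠ v) (ψ : List (V × V)) :
    pivotSupport ((u, v) :: ψ) = symmDiff {u, v} (pivotSupport ψ) := by
  ext x
  by_cases hu : x = u
  · subst hu
    simp [pivotSupport, Finset.mem_symmDiff, List.count_cons, Nat.odd_add_one, huv.symm]
  by_cases hv : x = v
  · subst hv
    simp [pivotSupport, Finset.mem_symmDiff, List.count_cons, Nat.odd_add_one, huv]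
  simp [pivotSupport, Finset.mem_symmDiff, List.count_cons, hu, hv, Ne.symm hu, Ne.symm hv]

lemma ReducedSeq.cons {u v : V} {ψ : List (V × V)} (hψ : ReducedSeq ψ) (huv : u ≠ v)
    (hu : u ∉ pivotSupport ψ) (hv : v ∉ pivotSupport ψ) : ReducedSeq ((u, v) :: ψ) := by
  have hsupp {x : V} (hx : x ∈ ψ.flatMap fun p => [p.1, p.2]) : x ∈ pivotSupport ψ := by
    simp [pivotSupport, List.count_eq_one_of_mem hψ hx]
  simp only [ReducedSeq, List.flatMap_cons, List.cons_append, List.nil_append, List.nodup_cons,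
    List.mem_cons, not_or]
  exact ⟨⟨huv, mt hsupp hu⟩, mt hsupp hv, hψ⟩

namespace SimpleGraph

lemma adjLagrangian_applyPivots {G : SimpleGraph V} {φ : List (V × V)}
    (h : PivotsApplicable G φ) :
    (applyPivots G φ).adjLagrangian = swapOn (pivotSupport φ) '' G.adjLagrangian := by
  induction φ generalizing G with
  | nil => simp [applyPivots, pivotSupport_nil]
  | cons p ψ ih =>
    obtain ⟨huv, hψ⟩ := h
    rw [applyPivots, ih hψ, adjLagrangian_pivot huv, ← Set.image_comp, swapOn_comp_swapOn,
      pivotSupport_cons huv.ne, symmDiff_comm]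

lemma exists_adj_of_injOn_fst {G : SimpleGraph V} {S : Finset V} (hS : S.Nonempty)
    (h : Set.InjOn Prod.fst (swapOn S '' G.adjLagrangian)) : ∃ u ∈ S, ∃ v ∈ S, G.Adj u v := by
  by_contra! hnadj
  obtain ⟨s, hs⟩ := hS
  have hzero : swapOn S (0, G.adjMatrix (ZMod 2) *ᵥ 0) = 0 := by
    ext <;> simp [swapOn, Finset.piecewise_same]
  have hfst : (swapOn S (Pi.single s 1, G.adjMatrix (ZMod 2) *ᵥ Pi.single s 1)).1 = 0 := by
    ext i
    by_cases hi : i ∈ S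
    · simp [swapOn, hi, adjMatrix_apply, hnadj i hi s hs]
    · simp [swapOn, hi, ne_of_mem_of_not_mem hs hi |>.symm]
  have hsame := h ⟨_, ⟨0, rfl⟩, rfl⟩ ⟨_, ⟨Pi.single s 1, rfl⟩, rfl⟩ (by rw [hzero, hfst]; rfl)
  have hsnd := congrFun (congrArg Prod.snd hsame) s
  simp [swapOn, hs] at hsnd

lemma exists_reduced_of_injOn_fst (S : Finset V) (G : SimpleGraph V)
    (h : Set.InjOn Prod.fst (swapOn S '' G.adjLagrangian)) :
    ∃ ψ, PivotsApplicable G ψ ∧ ReducedSeq ψ ∧ pivotSupport ψ = S := by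
  induction S using Finset.strongInduction generalizing G with
  | H S ih =>
  rcases S.eq_empty_or_nonempty with rfl | hS
  · exact ⟨[], trivial, List.nodup_nil, pivotSupport_nil⟩
  obtain ⟨u, hu, v, hv, huv⟩ := exists_adj_of_injOn_fst hS h
  have hsub : {u, v} ⊆ S := Finset.insert_subset hu (Finset.singleton_subset_iff.mpr hv)
  have hS : symmDiff (S \ {u, v}) {u, v} = S := by
    rw [sdiff_symmDiff_eq_sup, sup_eq_left.mpr hsub]
  have h' : Set.InjOn Prod.fst (swapOn (S \ {u, v}) '' (G.pivot u v).adjLagrangian) := by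
    rwa [adjLagrangian_pivot huv, ← Set.image_comp, swapOn_comp_swapOn, hS]
  obtain ⟨ψ, hψ, hred, hsupp⟩ :=
    ih _ (Finset.sdiff_ssubset hsub (Finset.insert_nonempty u {v})) _ h'
  refine ⟨(u, v) :: ψ, ⟨huv, hψ⟩, hred.cons huv.ne (by simp [hsupp]) (by simp [hsupp]), ?_⟩
  rw [pivotSupport_cons huv.ne, hsupp, symmDiff_comm, hS]

end SimpleGraph

/-- every applicable sequence of pivots admits an applicable reduced
sequence with the same support, hence with the same result. -/
theorem exists_reduced_sequence (G : SimpleGraph V) (phi : List (V × V))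
    (h : PivotsApplicable G phi) :
    ∃ phi' : List (V × V), PivotsApplicable G phi' ∧ ReducedSeq phi' ∧
      pivotSupport phi' = pivotSupport phi ∧ applyPivots G phi' = applyPivots G phi := by
  have hL := SimpleGraph.adjLagrangian_applyPivots h
  obtain ⟨ψ, hψ, hred, hsupp⟩ := SimpleGraph.exists_reduced_of_injOn_fst (pivotSupport phi) G
    (hL ▸ (applyPivots G phi).injOn_fst_adjLagrangian)
  refine ⟨ψ, hψ, hred, hsupp, SimpleGraph.adjLagrangian_injective ?_⟩
  rw [SimpleGraph.adjLagrangian_applyPivots hψ, hsupp, hL]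
end

section
/- Let V be a finite set and let A be a symmetric V × V matrix over GF(2) (a graph with loops). If φ and φ' are two sequences of operations applicable to A, each operation being either a local complementation *u at a looped vertex or a pivot [uv] at an edge between two distinct loop-free vertices, and sup(φ) = sup(φ'), then Aφ = Aφ'. -/
set_option linter.unusedSectionVars false

variable {V : Type*} [Fintype V] [DecidableEq V]

/-! Over GF(2) both operations are principal pivot transforms: `A*u = A * {u}` and
`A[uv] = A * {u, v}`, where `B = A * S` means that `B x = y` exactly when `A` sends `x` with its
`S`-coordinates replaced by those of `y` to `y` with its `S`-coordinates replaced by those of `x`.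
Exchanging coordinates on `S` and then on `T` is exchanging them on `S ∆ T`, so
`Aφ = A * sup(φ)`, and a matrix is determined by its graph. -/

open Matrix

namespace Finset

theorem piecewise_piecewise_swap {ι : Type*} [DecidableEq ι] {π : ι → Sort*}
    (s t : Finset ι) (f g : ∀ i, π i) :
    s.piecewise (t.piecewise f g) (t.piecewise g f) = (symmDiff s t).piecewise g f := by
  ext i
  by_cases hs : i ∈ s <;> by_cases ht : i ∈ t <;> simp [piecewise, mem_symmDiff, hs, ht]

variable {M : Type*} [AddCommGroup M]

theorem piecewise_singleton_eq_add_single (u : V) (y x : V → M) :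
    ({u} : Finset V).piecewise y x = x + Pi.single u (y u - x u) := by
  ext i
  obtain rfl | hi := eq_or_ne i u <;> simp [*]

theorem piecewise_pair_eq_add_single {u v : V} (huv : u ≠ v) (y x : V → M) :
    ({u, v} : Finset V).piecewise y x = x + Pi.single u (y u - x u) + Pi.single v (y v - x v) := by
  ext i
  obtain rfl | hiu := eq_or_ne i u
  · simp [huv]
  obtain rfl | hiv := eq_or_ne i v <;> simp [*]

end Finset

theorem Matrix.add_one_apply_dotProduct {R : Type*} [NonAssocSemiring R] (A : Matrix V V R)
    (u : V) (x : V → R) : (A + 1) u ⬝ᵥ x = (A *ᵥ x) u + x u := by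
  change ((A + 1) *ᵥ x) u = _
  rw [add_mulVec, one_mulVec]
  rfl

section PivotTransform

variable {R : Type*}

/-- The principal pivot transform `B = A * S`, described through graphs so that `A[S]` need not
be inverted. -/
def IsPivotTransform [Semiring R] (A : Matrix V V R) (S : Finset V) (B : Matrix V V R) : Prop :=
  ∀ x y, B *ᵥ x = y ↔ A *ᵥ S.piecewise y x = S.piecewise x y

variable [Semiring R] {A B C : Matrix V V R} {S T : Finset V}

theorem isPivotTransform_empty (A : Matrix V V R) : IsPivotTransform A ∅ A := fun x y => by
  simp only [Finset.piecewise_empty]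

theorem IsPivotTransform.trans (h₁ : IsPivotTransform A S B) (h₂ : IsPivotTransform B T C) :
    IsPivotTransform A (symmDiff S T) C := fun x y => by
  rw [h₂, h₁, Finset.piecewise_piecewise_swap, Finset.piecewise_piecewise_swap]

theorem IsPivotTransform.unique (hB : IsPivotTransform A S B) (hC : IsPivotTransform A S C) :
    B = C :=
  ext_iff_mulVec.2 fun x => ((hC x _).2 ((hB x _).1 rfl)).symm

end PivotTransform

theorem IsPivotTransform.of_exchange {R : Type*} [Ring R] {A B : Matrix V V R} {S : Finset V}
    -- `A[S]` is nonsingular, so the exchanged graph of `A` is the graph of a function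
    (hS : ∀ d : V → R, (∀ i ∉ S, d i = 0) → (∀ i ∈ S, (A *ᵥ d) i = 0) → d = 0)
    (hB : ∀ x, A *ᵥ S.piecewise (B *ᵥ x) x = S.piecewise x (B *ᵥ x)) :
    IsPivotTransform A S B := by
  refine fun x y => ⟨by rintro rfl; exact hB x, fun hy => ?_⟩
  set d := y - B *ᵥ x
  have key : A *ᵥ S.piecewise d (0 : V → R) = S.piecewise (0 : V → R) d := by
    have e₁ : S.piecewise d (0 : V → R) = S.piecewise y x - S.piecewise (B *ᵥ x) x := by
      ext i; by_cases hi : i ∈ S <;> simp [d, hi]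
    have e₂ : S.piecewise (0 : V → R) d = S.piecewise x y - S.piecewise x (B *ᵥ x) := by
      ext i; by_cases hi : i ∈ S <;> simp [d, hi]
    rw [e₁, e₂, mulVec_sub, hy, hB]
  have hdS : S.piecewise d (0 : V → R) = 0 :=
    hS _ (fun i hi => Finset.piecewise_eq_of_notMem _ _ _ hi)
      (fun i hi => by rw [key, Finset.piecewise_eq_of_mem _ _ _ hi]; rfl)
  rw [hdS, mulVec_zero] at key
  have hd : d = 0 := by
    ext i
    by_cases hi : i ∈ S
    · simpa [hi] using congrFun hdS i
    · simpa [hi] using (congrFun key i).symm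
  exact (sub_eq_zero.1 hd).symm

theorem ZMod.ite_and_eq_one_eq_mul (a b : ZMod 2) :
    (if a = 1 ∧ b = 1 then 1 else 0) = a * b := by
  revert a b; decide

section LocalComplementAndPivot

variable {A : Matrix V V (ZMod 2)} {u v : V}

theorem Matrix.IsSymm.mulVec_single_zmod_two (hA : A.IsSymm) (u : V) (s : ZMod 2) :
    A *ᵥ Pi.single u s = s • (A + 1) u + Pi.single u s := by
  ext i
  simp only [mulVec_single, op_smul_eq_smul, Pi.add_apply, Pi.smul_apply, col_apply,
    Matrix.add_apply, one_apply, Pi.single_apply, smul_eq_mul, hA.apply u i]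
  grind

theorem matLC_eq (hA : A.IsSymm) (hu : A u u = 1) :
    matLC A u = A + vecMulVec ((A + 1) u) ((A + 1) u) := by
  ext x y
  simp only [matLC, Matrix.add_apply, vecMulVec_apply, one_apply, hA.apply u x]
  split_ifs <;> subst_vars <;> grind

theorem matNbr_iff (hA : A.IsSymm) (hu : A u u = 0) (x : V) :
    matNbr A x u ↔ (A + 1) u x = 1 := by
  obtain rfl | hx := eq_or_ne x u
  · simp [matNbr, hu]
  · simp [matNbr, hx, hx.symm, hA.apply u x]

theorem matPivotEdge_eq (hA : A.IsSymm) (hu : A u u = 0) (hv : A v v = 0) :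
    matPivotEdge A u v =
      A + vecMulVec ((A + 1) u) ((A + 1) v) + vecMulVec ((A + 1) v) ((A + 1) u) := by
  ext x y
  by_cases hxy : x = y
  · subst hxy
    simp only [matPivotEdge, if_pos, Matrix.add_apply, vecMulVec_apply]
    grind
  · simp only [matPivotEdge, if_neg hxy, matNbr_iff hA hu, matNbr_iff hA hv,
      ZMod.ite_and_eq_one_eq_mul, Matrix.add_apply, vecMulVec_apply]

theorem matLC_isSymm (hA : A.IsSymm) (hu : A u u = 1) : (matLC A u).IsSymm := by
  rw [matLC_eq hA hu]
  exact hA.add (transpose_vecMulVec _ _)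

theorem matPivotEdge_isSymm (hA : A.IsSymm) (hu : A u u = 0) (hv : A v v = 0) :
    (matPivotEdge A u v).IsSymm := by
  rw [matPivotEdge_eq hA hu hv, add_assoc]
  exact hA.add <| by simp [IsSymm, add_comm]

theorem matLC_exchange (hA : A.IsSymm) (hu : A u u = 1) (x : V → ZMod 2) :
    A *ᵥ ({u} : Finset V).piecewise (matLC A u *ᵥ x) x =
      ({u} : Finset V).piecewise x (matLC A u *ᵥ x) := by
  set t := (A + 1) u ⬝ᵥ x with ht
  have hy : matLC A u *ᵥ x = A *ᵥ x + t • (A + 1) u := by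
    rw [matLC_eq hA hu, add_mulVec, vecMulVec_mulVec, op_smul_eq_smul]
  set y := matLC A u *ᵥ x
  have hyu : y u + x u = t := by
    have hc : (A + 1) u u = 0 := by rw [Matrix.add_apply, one_apply_eq, hu]; rfl
    rw [hy, Pi.add_apply, Pi.smul_apply, hc, smul_zero, add_zero, ht, add_one_apply_dotProduct]
  rw [Finset.piecewise_singleton_eq_add_single, Finset.piecewise_singleton_eq_add_single,
    CharTwo.sub_eq_add, CharTwo.sub_eq_add, add_comm (x u), hyu, mulVec_add,
    hA.mulVec_single_zmod_two, hy, add_assoc]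

theorem matPivotEdge_exchange (hA : A.IsSymm) (huv : u ≠ v) (hu : A u u = 0) (hv : A v v = 0)
    (he : A u v = 1) (x : V → ZMod 2) :
    A *ᵥ ({u, v} : Finset V).piecewise (matPivotEdge A u v *ᵥ x) x =
      ({u, v} : Finset V).piecewise x (matPivotEdge A u v *ᵥ x) := by
  set α := (A + 1) u ⬝ᵥ x with hα
  set β := (A + 1) v ⬝ᵥ x with hβ
  have hy : matPivotEdge A u v *ᵥ x = A *ᵥ x + β • (A + 1) u + α • (A + 1) v := by
    rw [matPivotEdge_eq hA hu hv, add_mulVec, add_mulVec, vecMulVec_mulVec, vecMulVec_mulVec,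
      op_smul_eq_smul, op_smul_eq_smul]
  set y := matPivotEdge A u v *ᵥ x
  rw [add_one_apply_dotProduct] at hα hβ
  have huu' : (A + 1) u u = 1 := by simp [hu]
  have huv' : (A + 1) u v = 1 := by simp [he, huv]
  have hvu' : (A + 1) v u = 1 := by simp [(hA.apply u v).trans he, huv.symm]
  have hvv' : (A + 1) v v = 1 := by simp [hv]
  have hyu : y u + x u = β := by
    simp only [hy, Pi.add_apply, Pi.smul_apply, smul_eq_mul, huu', hvu', mul_one, hα]
    grind
  have hyv : y v + x v = α := by
    simp only [hy, Pi.add_apply, Pi.smul_apply, smul_eq_mul, huv', hvv', mul_one, hβ]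
    grind
  rw [Finset.piecewise_pair_eq_add_single huv, Finset.piecewise_pair_eq_add_single huv,
    CharTwo.sub_eq_add, CharTwo.sub_eq_add, CharTwo.sub_eq_add, CharTwo.sub_eq_add,
    add_comm (x u), add_comm (x v), hyu, hyv, mulVec_add, mulVec_add,
    hA.mulVec_single_zmod_two, hA.mulVec_single_zmod_two, hy]
  abel

theorem isPivotTransform_matLC (hA : A.IsSymm) (hu : A u u = 1) :
    IsPivotTransform A {u} (matLC A u) := by
  refine .of_exchange (fun d hd hAd => ?_) (matLC_exchange hA hu)
  have hdu : d u = 0 := by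
    have hAdu : (A *ᵥ d) u = A u u * d u :=
      Fintype.sum_eq_single u fun j hj => by simp [hd j (by simpa using hj)]
    simpa [hAdu, hu] using hAd u (by simp)
  ext i
  obtain rfl | hi := eq_or_ne i u
  · exact hdu
  · exact hd i (by simpa using hi)

theorem isPivotTransform_matPivotEdge (hA : A.IsSymm) (huv : u ≠ v) (hu : A u u = 0)
    (hv : A v v = 0) (he : A u v = 1) :
    IsPivotTransform A {u, v} (matPivotEdge A u v) := by
  refine .of_exchange (fun d hd hAd => ?_) (matPivotEdge_exchange hA huv hu hv he)
  have hAd_apply (i : V) : (A *ᵥ d) i = A i u * d u + A i v * d v :=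
    Fintype.sum_eq_add u v huv fun j hj => by simp [hd j (by simp [hj.1, hj.2])]
  have hdv : d v = 0 := by simpa [hAd_apply, hu, he] using hAd u (by simp)
  have hdu : d u = 0 := by
    simpa [hAd_apply, hv, (hA.apply u v).trans he] using hAd v (by simp)
  ext i
  obtain rfl | hiu := eq_or_ne i u
  · exact hdu
  obtain rfl | hiv := eq_or_ne i v
  · exact hdv
  · exact hd i (by simp [hiu, hiv])

end LocalComplementAndPivot

theorem opsSupport_nil : opsSupport ([] : List (V ⊕ V × V)) = ∅ := by
  simp [opsSupport, opsVertices]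

theorem opsSupport_cons (o : V ⊕ V × V) (φ : List (V ⊕ V × V)) :
    opsSupport (o :: φ) = symmDiff (opsSupport [o]) (opsSupport φ) := by
  ext x
  simp only [opsSupport, opsVertices, List.flatMap_cons, List.flatMap_nil, List.append_nil,
    List.count_append, Nat.odd_add, Finset.mem_symmDiff, Finset.mem_filter, Finset.mem_univ,
    true_and]
  grind [Nat.not_even_iff_odd]

theorem opsSupport_inl (u : V) : opsSupport [Sum.inl u] = {u} := by
  ext x
  obtain rfl | hx := eq_or_ne u x <;> simp [opsSupport, opsVertices, *, Ne.symm]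

theorem opsSupport_inr {u v : V} (huv : u ≠ v) : opsSupport [Sum.inr (u, v)] = {u, v} := by
  ext x
  obtain rfl | hu := eq_or_ne u x
  · simp [opsSupport, opsVertices, List.count_cons, huv.symm]
  obtain rfl | hv := eq_or_ne v x <;> simp [opsSupport, opsVertices, List.count_cons, *, Ne.symm]

theorem isPivotTransform_applyOps : ∀ (φ : List (V ⊕ V × V)) (A : Matrix V V (ZMod 2)),
    A.IsSymm → OpsApplicable A φ → IsPivotTransform A (opsSupport φ) (applyOps A φ)
  | [], A, _, _ => by
    rw [opsSupport_nil]
    exact isPivotTransform_empty A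
  | Sum.inl u :: φ, A, hA, ⟨hu, hφ⟩ => by
    rw [opsSupport_cons, opsSupport_inl]
    exact (isPivotTransform_matLC hA hu).trans
      (isPivotTransform_applyOps φ _ (matLC_isSymm hA hu) hφ)
  | Sum.inr (u, v) :: φ, A, hA, ⟨huv, hu, hv, he, hφ⟩ => by
    rw [opsSupport_cons, opsSupport_inr huv]
    exact (isPivotTransform_matPivotEdge hA huv hu hv he).trans
      (isPivotTransform_applyOps φ _ (matPivotEdge_isSymm hA hu hv) hφ)

/-- two applicable mixed sequences of local complementations and pivots
with equal support yield the same graph with loops. -/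
theorem applyOps_eq_of_support_eq (A : Matrix V V (ZMod 2)) (hA : A.IsSymm)
    (phi phi' : List (V ⊕ V × V)) (h : OpsApplicable A phi) (h' : OpsApplicable A phi')
    (hs : opsSupport phi = opsSupport phi') :
    applyOps A phi = applyOps A phi' := by
  have hφ := isPivotTransform_applyOps phi A hA h
  rw [hs] at hφ
  exact hφ.unique (isPivotTransform_applyOps phi' A hA h')
end
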